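/- arXiv:2409.00883 — 3 statements merged into one kernel-verified Lean document; each statement's English description precedes it below -/
import Mathlib

section
/- Let A = U_A Σ V_Aᵀ be the SVD of A ∈ ℝ^{m×n} with m ≥ n and rank k, with singular values σ₁ ≥ … ≥ σ_k > 0, and let L ∈ ℝ^{p×n} satisfy LᵀL = I. Define G = diag(1/√(σ₁²+1), …, 1/√(σ_k²+1), 1, …, 1) ∈ ℝ^{n×n} and Y = V_A G. Then A = U_A (ΣG) Y⁻¹ and L = (L V_A) G Y⁻¹, where ΣG and G are diagonal, the columns of U_A are orthonormal, the columns of L V_A are orthonormal, and (ΣG)ᵢᵢ² + Gᵢᵢ² = 1 for i = 1, …, k. -/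
open Matrix

/-- GSVD of `{A, L}` from the SVD of `A` when `L` is column orthogonal. -/
theorem gsvd_from_svd_of_column_orthogonal
    {m n p k : ℕ} (hmn : n ≤ m) (hk : k ≤ n)
    (U : Matrix (Fin m) (Fin m) ℝ) (V : Matrix (Fin n) (Fin n) ℝ)
    (S : Matrix (Fin m) (Fin n) ℝ) (σ : Fin n → ℝ)
    (A : Matrix (Fin m) (Fin n) ℝ) (L : Matrix (Fin p) (Fin n) ℝ)
    (hU : Uᵀ * U = 1) (hU' : U * Uᵀ = 1)
    (hV : Vᵀ * V = 1) (hV' : V * Vᵀ = 1)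
    (hS : ∀ (i : Fin m) (j : Fin n), S i j = if (i : ℕ) = (j : ℕ) then σ j else 0)
    (hσdec : ∀ i j : Fin n, i ≤ j → σ j ≤ σ i)
    (hσpos : ∀ i : Fin n, 0 < σ i ↔ (i : ℕ) < k)
    (hA : A = U * S * Vᵀ)
    (hL : Lᵀ * L = 1) :
    let g : Fin n → ℝ := fun i => if (i : ℕ) < k then 1 / Real.sqrt (σ i ^ 2 + 1) else 1
    let G : Matrix (Fin n) (Fin n) ℝ := diagonal g
    let Y : Matrix (Fin n) (Fin n) ℝ := V * G
    A = U * (S * G) * Y⁻¹ ∧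
    L = (L * V) * G * Y⁻¹ ∧
    (∀ (i : Fin m) (j : Fin n), (i : ℕ) ≠ (j : ℕ) → (S * G) i j = 0) ∧
    Uᵀ * U = 1 ∧
    (L * V)ᵀ * (L * V) = 1 ∧
    ∀ i : Fin n, (i : ℕ) < k → (σ i * g i) ^ 2 + (g i) ^ 2 = 1 := by
  intro g G Y
  have hpos : ∀ i : Fin n, (0:ℝ) < σ i ^ 2 + 1 := fun i => by positivity
  have hg : ∀ i : Fin n, g i ≠ 0 := by
    intro i
    simp only [g]
    split
    · have h := Real.sqrt_pos.mpr (hpos i)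
      positivity
    · norm_num
  have hGinv : G * diagonal (fun i => (g i)⁻¹) = 1 := by
    rw [show G = diagonal g from rfl, diagonal_mul_diagonal]
    convert diagonal_one with i
    exact mul_inv_cancel₀ (hg i)
  have hY : Y * (diagonal (fun i => (g i)⁻¹) * Vᵀ) = 1 := by
    show V * G * _ = _
    simp only [Matrix.mul_assoc, ← Matrix.mul_assoc G, hGinv, one_mul, hV']
  have hYinv : Y⁻¹ = diagonal (fun i => (g i)⁻¹) * Vᵀ := inv_eq_right_inv hY
  refine ⟨?_, ?_, ?_, hU, ?_, ?_⟩
  · rw [hYinv, hA]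
    simp only [Matrix.mul_assoc, ← Matrix.mul_assoc G, hGinv, one_mul]
  · rw [hYinv]
    simp only [Matrix.mul_assoc, ← Matrix.mul_assoc G, hGinv, one_mul, hV', Matrix.mul_one]
  · intro i j hij
    rw [show (S * G) i j = S i j * g j from mul_diagonal .., hS i j, if_neg hij, zero_mul]
  · rw [transpose_mul]
    simp only [Matrix.mul_assoc, ← Matrix.mul_assoc Lᵀ, hL, one_mul, hV]
  · intro i hi
    have hgv : g i = 1 / Real.sqrt (σ i ^ 2 + 1) := by simp [g, hi]
    have hs : Real.sqrt (σ i ^ 2 + 1) ^ 2 = σ i ^ 2 + 1 :=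
      Real.sq_sqrt (hpos i).le
    have hsne : Real.sqrt (σ i ^ 2 + 1) ≠ 0 := by
      have := Real.sqrt_pos.mpr (hpos i); positivity
    rw [hgv]
    field_simp
    exact hs.symm
end

section
/- Let F₀ = (1/4)·tridiag with first/last rows (3,1)/(1,3) and interior rows (1,2,1), F₁ = (√2/4)·matrix with rows (−1,0,1) pattern (first row (−1,1), last row (−1,1)), F₂ = (1/4)·matrix with interior rows (−1,2,−1), first row (1,−1), last row (−1,1), all n×n. Then F₀ᵀF₀ + F₁ᵀF₁ + F₂ᵀF₂ = I_n, i.e., the stacked framelet analysis operator L = [F₀; F₁; F₂] is column orthogonal. -/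
open Matrix

namespace FrameletAux

variable (n : ℕ)

def S : Matrix (Fin n) (Fin n) ℝ := fun i j => if (i : ℕ) + 1 = (j : ℕ) then 1 else 0
def E : Matrix (Fin n) (Fin n) ℝ :=
  fun i j => if i = j ∧ ((i : ℕ) = 0 ∨ (i : ℕ) = n - 1) then 1 else 0
def D : Matrix (Fin n) (Fin n) ℝ :=
  fun i j => if i = j then (if (i : ℕ) = 0 then -1 else if (i : ℕ) = n - 1 then 1 else 0) else 0

lemma Et : (E n)ᵀ = E n := by
  ext i j
  simp only [transpose_apply, E, Fin.ext_iff, true_and]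
  split_ifs <;> first | rfl | (exfalso; omega)

lemma Dt : (D n)ᵀ = D n := by
  ext i j
  simp only [transpose_apply, D, Fin.ext_iff, true_and]
  split_ifs <;> first | rfl | (exfalso; omega)

lemma hSED : S n * (E n - D n) = 0 := by
  ext i j
  rw [mul_apply, Matrix.zero_apply]
  apply Finset.sum_eq_zero
  intro k _
  have hk := k.isLt
  simp only [S, E, D, Matrix.sub_apply, Fin.ext_iff, true_and]
  split_ifs <;> first | (exfalso; omega) | ring1

lemma hEDS : (E n + D n) * S n = 0 := by
  ext i j
  rw [mul_apply, Matrix.zero_apply]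
  apply Finset.sum_eq_zero
  intro k _
  have hk := k.isLt
  have hj := j.isLt
  simp only [S, E, D, Matrix.add_apply, Fin.ext_iff, true_and]
  split_ifs <;> first | (exfalso; omega) | ring1

lemma hStED : (S n)ᵀ * (E n + D n) = 0 := by
  ext i j
  rw [mul_apply, Matrix.zero_apply]
  apply Finset.sum_eq_zero
  intro k _
  have hk := k.isLt
  have hi := i.isLt
  simp only [S, E, D, Matrix.add_apply, transpose_apply, Fin.ext_iff, true_and]
  split_ifs <;> first | (exfalso; omega) | ring1

lemma hEDSt : (E n - D n) * (S n)ᵀ = 0 := by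
  ext i j
  rw [mul_apply, Matrix.zero_apply]
  apply Finset.sum_eq_zero
  intro k _
  have hk := k.isLt
  simp only [S, E, D, Matrix.sub_apply, transpose_apply, Fin.ext_iff, true_and]
  split_ifs <;> first | (exfalso; omega) | ring1

lemma hEE : E n * E n = E n := by
  ext i j
  rw [mul_apply, Finset.sum_eq_single i]
  · simp only [E, Fin.ext_iff, true_and]
    split_ifs <;> first | (exfalso; omega) | ring1
  · intro k _ hk
    have hki : ¬ ((i : ℕ) = (k : ℕ)) := fun h => hk (Fin.ext h.symm)
    simp only [E, Fin.ext_iff, true_and]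
    split_ifs <;> first | (exfalso; omega) | ring1
  · simp

lemma hDD : D n * D n = E n := by
  ext i j
  rw [mul_apply, Finset.sum_eq_single i]
  · simp only [D, E, Fin.ext_iff, true_and]
    split_ifs <;> first | (exfalso; omega) | ring1
  · intro k _ hk
    have hki : ¬ ((i : ℕ) = (k : ℕ)) := fun h => hk (Fin.ext h.symm)
    simp only [D, E, Fin.ext_iff, true_and]
    split_ifs <;> first | (exfalso; omega) | ring1
  · simp

lemma hSSt (hn : 2 ≤ n) :
    S n * (S n)ᵀ + (S n)ᵀ * S n = 1 + 1 - E n := by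
  ext i j
  have hi := i.isLt
  have hj := j.isLt
  have h1 : ∑ k, S n i k * (S n)ᵀ k j
      = if (i : ℕ) = (j : ℕ) ∧ (i : ℕ) + 1 < n then 1 else 0 := by
    by_cases hc : (i : ℕ) + 1 < n
    · rw [Finset.sum_eq_single (⟨(i : ℕ) + 1, hc⟩ : Fin n)]
      · simp only [S, transpose_apply, Fin.ext_iff, true_and]
        split_ifs <;> first | (exfalso; omega) | ring1
      · intro k _ hk
        have hki : ¬ ((k : ℕ) = (i : ℕ) + 1) := fun h => hk (Fin.ext h)
        simp only [S, transpose_apply, Fin.ext_iff, true_and]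
        split_ifs <;> first | (exfalso; omega) | ring1
      · simp
    · rw [if_neg (by omega)]
      apply Finset.sum_eq_zero
      intro k _
      have hk := k.isLt
      simp only [S, transpose_apply, Fin.ext_iff, true_and]
      split_ifs <;> first | (exfalso; omega) | ring1
  have h2 : ∑ k, (S n)ᵀ i k * S n k j
      = if (i : ℕ) = (j : ℕ) ∧ 1 ≤ (i : ℕ) then 1 else 0 := by
    by_cases hc : 1 ≤ (i : ℕ)
    · rw [Finset.sum_eq_single (⟨(i : ℕ) - 1, by omega⟩ : Fin n)]
      · simp only [S, transpose_apply, Fin.ext_iff, true_and]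
        split_ifs <;> first | (exfalso; omega) | ring1
      · intro k _ hk
        have hki : ¬ ((k : ℕ) = (i : ℕ) - 1) := fun h => hk (Fin.ext h)
        simp only [S, transpose_apply, Fin.ext_iff, true_and]
        split_ifs <;> first | (exfalso; omega) | ring1
      · simp
    · rw [if_neg (by omega)]
      apply Finset.sum_eq_zero
      intro k _
      have hk := k.isLt
      simp only [S, transpose_apply, Fin.ext_iff, true_and]
      split_ifs <;> first | (exfalso; omega) | ring1
  simp only [Matrix.add_apply, Matrix.sub_apply, one_apply, mul_apply, E, Fin.ext_iff, true_and] at *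
  rw [h1, h2]
  split_ifs <;> first | (exfalso; omega) | norm_num

lemma key (hn : 2 ≤ n) :
    (S n + (S n)ᵀ + E n) * (S n + (S n)ᵀ + E n) +
      ((S n)ᵀ - S n + D n) * (S n - (S n)ᵀ + D n) =
    (1 : Matrix (Fin n) (Fin n) ℝ) + 1 + 1 + 1 := by
  have expand :
      (S n + (S n)ᵀ + E n) * (S n + (S n)ᵀ + E n) +
        ((S n)ᵀ - S n + D n) * (S n - (S n)ᵀ + D n) =
      ((S n * (S n)ᵀ + (S n)ᵀ * S n) + (S n * (S n)ᵀ + (S n)ᵀ * S n)) +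
        (S n * (E n - D n) + (E n + D n) * S n +
          (S n)ᵀ * (E n + D n) + (E n - D n) * (S n)ᵀ) +
        (E n * E n + D n * D n) := by noncomm_ring
  rw [expand, hSED, hEDS, hStED, hEDSt, hEE, hDD, hSSt n hn]
  noncomm_ring

end FrameletAux

open FrameletAux in
/-- The B-spline framelet filter matrices `F₀, F₁, F₂` satisfy
`F₀ᵀF₀ + F₁ᵀF₁ + F₂ᵀF₂ = I`, i.e. the stacked analysis operator is column
orthogonal. -/
theorem framelet_operator_column_orthogonal (n : ℕ) (hn : 2 ≤ n) :
    let F₀ : Matrix (Fin n) (Fin n) ℝ := fun i j =>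
      (1 / 4) * (if i = j then (if (i : ℕ) = 0 ∨ (i : ℕ) = n - 1 then 3 else 2)
        else if (i : ℕ) + 1 = (j : ℕ) ∨ (j : ℕ) + 1 = (i : ℕ) then 1 else 0)
    let F₁ : Matrix (Fin n) (Fin n) ℝ := fun i j =>
      (Real.sqrt 2 / 4) * (if (i : ℕ) + 1 = (j : ℕ) then 1
        else if (j : ℕ) + 1 = (i : ℕ) then -1
        else if i = j then (if (i : ℕ) = 0 then -1 else if (i : ℕ) = n - 1 then 1 else 0)
        else 0)
    let F₂ : Matrix (Fin n) (Fin n) ℝ := fun i j =>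
      (1 / 4) * (if i = j then (if (i : ℕ) = 0 ∨ (i : ℕ) = n - 1 then 1 else 2)
        else if (i : ℕ) + 1 = (j : ℕ) ∨ (j : ℕ) + 1 = (i : ℕ) then -1 else 0)
    F₀ᵀ * F₀ + F₁ᵀ * F₁ + F₂ᵀ * F₂ = 1 := by
  intro F₀ F₁ F₂
  have hF₀ : F₀ = (1/4 : ℝ) • ((1 : Matrix (Fin n) (Fin n) ℝ) + 1 + (S n + (S n)ᵀ + E n)) := by
    ext i j
    have hi := i.isLt
    have hj := j.isLt
    simp only [F₀, Matrix.smul_apply, Matrix.add_apply, one_apply, transpose_apply, S, E,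
      smul_eq_mul, Fin.ext_iff, true_and]
    split_ifs <;> first | (exfalso; omega) | norm_num
  have hF₁ : F₁ = (Real.sqrt 2 / 4 : ℝ) • (S n - (S n)ᵀ + D n) := by
    ext i j
    have hi := i.isLt
    have hj := j.isLt
    simp only [F₁, Matrix.smul_apply, Matrix.add_apply, Matrix.sub_apply, transpose_apply, S, D,
      smul_eq_mul, Fin.ext_iff, true_and]
    split_ifs <;> first | (exfalso; omega) | ring1
  have hF₂ : F₂ = (1/4 : ℝ) • ((1 : Matrix (Fin n) (Fin n) ℝ) + 1 - (S n + (S n)ᵀ + E n)) := by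
    ext i j
    have hi := i.isLt
    have hj := j.isLt
    simp only [F₂, Matrix.smul_apply, Matrix.add_apply, Matrix.sub_apply, one_apply, transpose_apply, S, E,
      smul_eq_mul, Fin.ext_iff, true_and]
    split_ifs <;> first | (exfalso; omega) | norm_num
  rw [hF₀, hF₁, hF₂]
  rw [transpose_smul, transpose_smul, transpose_smul]
  rw [smul_mul_smul_comm, smul_mul_smul_comm, smul_mul_smul_comm]
  have hG₀t : ((1 : Matrix (Fin n) (Fin n) ℝ) + 1 + (S n + (S n)ᵀ + E n))ᵀ
      = (1 : Matrix (Fin n) (Fin n) ℝ) + 1 + (S n + (S n)ᵀ + E n) := by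
    simp [transpose_add, transpose_one, transpose_transpose, Et, add_comm (S n) ((S n)ᵀ)]
  have hG₁t : (S n - (S n)ᵀ + D n)ᵀ = (S n)ᵀ - S n + D n := by
    simp [transpose_add, transpose_sub, transpose_transpose, Dt]
  have hG₂t : ((1 : Matrix (Fin n) (Fin n) ℝ) + 1 - (S n + (S n)ᵀ + E n))ᵀ
      = (1 : Matrix (Fin n) (Fin n) ℝ) + 1 - (S n + (S n)ᵀ + E n) := by
    simp [transpose_add, transpose_sub, transpose_one, transpose_transpose, Et,
      add_comm (S n) ((S n)ᵀ)]
  rw [hG₀t, hG₁t, hG₂t]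
  have hS2 : Real.sqrt 2 / 4 * (Real.sqrt 2 / 4) = 1/8 := by
    rw [div_mul_div_comm, Real.mul_self_sqrt (by norm_num)]
    norm_num
  rw [hS2]
  set A := S n + (S n)ᵀ + E n with hA
  set B := S n - (S n)ᵀ + D n with hB
  set Bt := (S n)ᵀ - S n + D n with hBt
  have hmain :
      ((1 : Matrix (Fin n) (Fin n) ℝ) + 1 + A) * ((1 : Matrix (Fin n) (Fin n) ℝ) + 1 + A)
        + ((1 : Matrix (Fin n) (Fin n) ℝ) + 1 - A) * ((1 : Matrix (Fin n) (Fin n) ℝ) + 1 - A)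
        + (Bt * B + Bt * B)
      = (16 : ℝ) • (1 : Matrix (Fin n) (Fin n) ℝ) := by
    have expand :
        ((1 : Matrix (Fin n) (Fin n) ℝ) + 1 + A) * ((1 : Matrix (Fin n) (Fin n) ℝ) + 1 + A)
          + ((1 : Matrix (Fin n) (Fin n) ℝ) + 1 - A) * ((1 : Matrix (Fin n) (Fin n) ℝ) + 1 - A)
          + (Bt * B + Bt * B)
        = ((1 : Matrix (Fin n) (Fin n) ℝ) + 1 + 1 + 1) + ((1 : Matrix (Fin n) (Fin n) ℝ) + 1 + 1 + 1)
          + ((A * A + Bt * B) + (A * A + Bt * B)) := by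
      noncomm_ring
    rw [expand, hA, hBt, hB, key n hn]
    have : ((16 : ℝ) • (1 : Matrix (Fin n) (Fin n) ℝ)) =
        ((1 : Matrix (Fin n) (Fin n) ℝ) + 1 + 1 + 1) + (1 + 1 + 1 + 1)
          + ((1 + 1 + 1 + 1) + (1 + 1 + 1 + 1)) := by
      module
    rw [this]
  calc (1/4 * (1/4) : ℝ) • (((1 : Matrix (Fin n) (Fin n) ℝ) + 1 + A) * (1 + 1 + A))
        + (1/8 : ℝ) • (Bt * B)
        + (1/4 * (1/4) : ℝ) • (((1 : Matrix (Fin n) (Fin n) ℝ) + 1 - A) * (1 + 1 - A))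
      = (1/16 : ℝ) • ((((1 : Matrix (Fin n) (Fin n) ℝ) + 1 + A) * (1 + 1 + A))
          + (((1 : Matrix (Fin n) (Fin n) ℝ) + 1 - A) * (1 + 1 - A)) + (Bt * B + Bt * B)) := by
        module
    _ = (1/16 : ℝ) • ((16 : ℝ) • (1 : Matrix (Fin n) (Fin n) ℝ)) := by rw [hmain]
    _ = 1 := by module
end

section
/- Given a vectorized linear system with Kronecker structure, the solution x = (AᵀA + λ²LᵀL)⁻¹(Aᵀb + λ²Lᵀh) with A = A₁⊗A₂ and L = L₁⊗L₂, where Aᵢ = Uᵢ Dᵢ Yᵢ⁻¹ and Lᵢ = Vᵢ Mᵢ Yᵢ⁻¹ are joint decompositions with Uᵢ, Vᵢ column orthogonal, Dᵢ, Mᵢ diagonal, and Yᵢ invertible, can be written as x = (Y₁⊗Y₂)(D² + λ²M²)⁻¹(D (U₁⊗U₂)ᵀ b + λ² M (V₁⊗V₂)ᵀ h), where D = D₁⊗D₂ and M = M₁⊗M₂. -/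
open Matrix Kronecker

/-- Solution of the Tikhonov-type subproblem via the joint Kronecker
decomposition. -/
theorem tikhonov_solution_via_kronecker_decomposition
    {n : ℕ} (lam : ℝ)
    (A₁ A₂ L₁ L₂ U₁ U₂ V₁ V₂ Y₁ Y₂ : Matrix (Fin n) (Fin n) ℝ)
    (d₁ d₂ m₁ m₂ : Fin n → ℝ)
    (hU₁ : U₁ᵀ * U₁ = 1) (hU₂ : U₂ᵀ * U₂ = 1)
    (hV₁ : V₁ᵀ * V₁ = 1) (hV₂ : V₂ᵀ * V₂ = 1)
    (hY₁ : IsUnit Y₁) (hY₂ : IsUnit Y₂)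
    (hA₁ : A₁ = U₁ * diagonal d₁ * Y₁⁻¹) (hA₂ : A₂ = U₂ * diagonal d₂ * Y₂⁻¹)
    (hL₁ : L₁ = V₁ * diagonal m₁ * Y₁⁻¹) (hL₂ : L₂ = V₂ * diagonal m₂ * Y₂⁻¹)
    (b h : Fin n × Fin n → ℝ)
    (hDM : IsUnit ((diagonal d₁ ⊗ₖ diagonal d₂) * (diagonal d₁ ⊗ₖ diagonal d₂)
        + (lam ^ 2) • ((diagonal m₁ ⊗ₖ diagonal m₂) * (diagonal m₁ ⊗ₖ diagonal m₂)))) :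
    ((A₁ ⊗ₖ A₂)ᵀ * (A₁ ⊗ₖ A₂) + (lam ^ 2) • ((L₁ ⊗ₖ L₂)ᵀ * (L₁ ⊗ₖ L₂)))⁻¹.mulVec
        ((A₁ ⊗ₖ A₂)ᵀ.mulVec b + (lam ^ 2) • (L₁ ⊗ₖ L₂)ᵀ.mulVec h)
      = (Y₁ ⊗ₖ Y₂).mulVec
          (((diagonal d₁ ⊗ₖ diagonal d₂) * (diagonal d₁ ⊗ₖ diagonal d₂)
              + (lam ^ 2) • ((diagonal m₁ ⊗ₖ diagonal m₂) * (diagonal m₁ ⊗ₖ diagonal m₂)))⁻¹.mulVec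
            ((diagonal d₁ ⊗ₖ diagonal d₂).mulVec ((U₁ ⊗ₖ U₂)ᵀ.mulVec b)
              + (lam ^ 2) • (diagonal m₁ ⊗ₖ diagonal m₂).mulVec ((V₁ ⊗ₖ V₂)ᵀ.mulVec h))) := by
  set Y := Y₁ ⊗ₖ Y₂ with hY
  set Yi := Y₁⁻¹ ⊗ₖ Y₂⁻¹ with hYi
  set D := diagonal d₁ ⊗ₖ diagonal d₂ with hD
  set M := diagonal m₁ ⊗ₖ diagonal m₂ with hM
  set U := U₁ ⊗ₖ U₂ with hU
  set V := V₁ ⊗ₖ V₂ with hV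
  set S := D * D + (lam ^ 2) • (M * M) with hS
  have hd₁ := (Matrix.isUnit_iff_isUnit_det _).mp hY₁
  have hd₂ := (Matrix.isUnit_iff_isUnit_det _).mp hY₂
  have hYYi : Y * Yi = 1 := by
    rw [hY, hYi, ← Matrix.mul_kronecker_mul, Matrix.mul_nonsing_inv _ hd₁,
      Matrix.mul_nonsing_inv _ hd₂, Matrix.one_kronecker_one]
  have hYiY : Yi * Y = 1 := by
    rw [hY, hYi, ← Matrix.mul_kronecker_mul, Matrix.nonsing_inv_mul _ hd₁,
      Matrix.nonsing_inv_mul _ hd₂, Matrix.one_kronecker_one]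
  have hUt : Uᵀ * U = 1 := by
    rw [hU, ← Matrix.kroneckerMap_transpose, ← Matrix.mul_kronecker_mul, hU₁, hU₂,
      Matrix.one_kronecker_one]
  have hVt : Vᵀ * V = 1 := by
    rw [hV, ← Matrix.kroneckerMap_transpose, ← Matrix.mul_kronecker_mul, hV₁, hV₂,
      Matrix.one_kronecker_one]
  have hDt : Dᵀ = D := by
    rw [hD, ← Matrix.kroneckerMap_transpose, Matrix.diagonal_transpose, Matrix.diagonal_transpose]
  have hMt : Mᵀ = M := by
    rw [hM, ← Matrix.kroneckerMap_transpose, Matrix.diagonal_transpose, Matrix.diagonal_transpose]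
  have hAk : A₁ ⊗ₖ A₂ = U * D * Yi := by
    rw [hA₁, hA₂, ← Matrix.mul_kronecker_mul, ← Matrix.mul_kronecker_mul]
  have hLk : L₁ ⊗ₖ L₂ = V * M * Yi := by
    rw [hL₁, hL₂, ← Matrix.mul_kronecker_mul, ← Matrix.mul_kronecker_mul]
  have hSdet : IsUnit S.det := (Matrix.isUnit_iff_isUnit_det S).mp hDM
  have hSS : S * S⁻¹ = 1 := Matrix.mul_nonsing_inv S hSdet
  have hA2 : (A₁ ⊗ₖ A₂)ᵀ * (A₁ ⊗ₖ A₂) = Yiᵀ * (D * D) * Yi := by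
    have key : Uᵀ * (U * (D * Yi)) = D * Yi := by
      rw [← Matrix.mul_assoc, hUt, Matrix.one_mul]
    rw [hAk]
    simp only [Matrix.transpose_mul, hDt, Matrix.mul_assoc, key]
  have hL2 : (L₁ ⊗ₖ L₂)ᵀ * (L₁ ⊗ₖ L₂) = Yiᵀ * (M * M) * Yi := by
    have key : Vᵀ * (V * (M * Yi)) = M * Yi := by
      rw [← Matrix.mul_assoc, hVt, Matrix.one_mul]
    rw [hLk]
    simp only [Matrix.transpose_mul, hMt, Matrix.mul_assoc, key]
  have hMsum : (A₁ ⊗ₖ A₂)ᵀ * (A₁ ⊗ₖ A₂) + (lam ^ 2) • ((L₁ ⊗ₖ L₂)ᵀ * (L₁ ⊗ₖ L₂))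
      = Yiᵀ * S * Yi := by
    rw [hA2, hL2, hS]
    simp only [Matrix.mul_add, Matrix.add_mul, Matrix.mul_smul, Matrix.smul_mul]
  have hinv : ((A₁ ⊗ₖ A₂)ᵀ * (A₁ ⊗ₖ A₂) + (lam ^ 2) • ((L₁ ⊗ₖ L₂)ᵀ * (L₁ ⊗ₖ L₂)))⁻¹
      = Y * S⁻¹ * Yᵀ := by
    rw [hMsum]
    apply Matrix.inv_eq_right_inv
    have k1 : Yi * (Y * (S⁻¹ * Yᵀ)) = S⁻¹ * Yᵀ := by
      rw [← Matrix.mul_assoc, hYiY, Matrix.one_mul]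
    have k2 : S * (S⁻¹ * Yᵀ) = Yᵀ := by
      rw [← Matrix.mul_assoc, hSS, Matrix.one_mul]
    simp only [Matrix.mul_assoc, k1, k2]
    rw [← Matrix.transpose_mul, hYYi, Matrix.transpose_one]
  have hvec : (A₁ ⊗ₖ A₂)ᵀ.mulVec b + (lam ^ 2) • (L₁ ⊗ₖ L₂)ᵀ.mulVec h
      = Yiᵀ.mulVec (D.mulVec (Uᵀ.mulVec b) + (lam ^ 2) • M.mulVec (Vᵀ.mulVec h)) := by
    rw [hAk, hLk]
    simp only [Matrix.transpose_mul, hDt, hMt, Matrix.mulVec_add, Matrix.mulVec_smul,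
      ← Matrix.mulVec_mulVec]
  rw [hinv, hvec, Matrix.mulVec_mulVec]
  have hfin : Y * S⁻¹ * Yᵀ * Yiᵀ = Y * S⁻¹ := by
    rw [Matrix.mul_assoc, ← Matrix.transpose_mul, hYiY, Matrix.transpose_one, Matrix.mul_one]
  rw [hfin, ← Matrix.mulVec_mulVec]
end
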